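/- Fix an integer N ≥ 1, γ ∈ ℝ and λ ∈ ℂ^N, and suppose f ∈ sol^γ_λ. Then f solves the quantum nonlinear Schrödinger eigenvalue problem with eigenvalue E = Σ_{j=1}^N λ_j²; explicitly: (i) −Σ_{j=1}^N (∂_j² f)(x) = (Σ_{j=1}^N λ_j²) f(x) for every x ∈ ℝ^N_reg, and (ii) f satisfies the derivative jump conditions (with coupling γ). -/

import Mathlib

open scoped BigOperators
open MeasureTheory Complex

noncomputable section

abbrev Pt (N : ℕ) := Fin N → ℝ
abbrev Fn (N : ℕ) := Pt N → ℂ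

/-- The permutation `w` acting on points: `(w • x) j = x (w⁻¹ j)`. -/
def permPt {N : ℕ} (w : Equiv.Perm (Fin N)) (x : Pt N) : Pt N := fun j => x (w⁻¹ j)

/-- The fundamental (positive) alcove `ℝ^N_+ = {x : x_1 > … > x_N}`. -/
def posAlcove (N : ℕ) : Set (Pt N) := {x | ∀ i j : Fin N, i < j → x j < x i}

/-- The alcove `w⁻¹ ℝ^N_+`. -/
def alcove {N : ℕ} (w : Equiv.Perm (Fin N)) : Set (Pt N) := {x | permPt w x ∈ posAlcove N}

/-- Regular vectors: pairwise distinct coordinates. -/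
def regPts (N : ℕ) : Set (Pt N) := {x | ∀ i j : Fin N, i ≠ j → x i ≠ x j}

/-- Partial derivative in the `j`-th coordinate. -/
def pd {N : ℕ} (j : Fin N) (f : Fn N) : Fn N :=
  fun x => deriv (fun t : ℝ => f (Function.update x j t)) (x j)

/-- The plane wave `e^{iλ}`. -/
def planeWave {N : ℕ} (lam : Fin N → ℂ) : Fn N :=
  fun x => Complex.exp (Complex.I * ∑ j, lam j * (x j : ℂ))

/-- The integral operator `I_{jk}`:
`(I_{jk} f)(x) = ∫_0^{x_j-x_k} f(x - y(e_j - e_k)) dy`. -/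
def Iop {N : ℕ} (j k : Fin N) (f : Fn N) : Fn N :=
  fun x => ∫ y in (0:ℝ)..(x j - x k),
    f (Function.update (Function.update x j (x j - y)) k (x k + y))

/-- The integral-reflection operator `s^γ` associated to the transposition `(j k)`. -/
def sIR {N : ℕ} (γ : ℝ) (j k : Fin N) (f : Fn N) : Fn N :=
  fun x => f (permPt (Equiv.swap j k) x) + (γ : ℂ) * Iop j k f x

/-- The integral-reflection operator for the simple transposition `s_j = (j, j+1)`
(zero-based); identity for out-of-range `j`. -/
def sSimple {N : ℕ} (γ : ℝ) (j : ℕ) (f : Fn N) : Fn N :=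
  if h : j + 1 < N then sIR γ ⟨j, Nat.lt_of_succ_lt h⟩ ⟨j + 1, h⟩ f else f

/-- `w^γ` computed from a word `L` of simple reflections:
`wordOp γ [i₁,…,i_l] f = s_{i₁}^γ (⋯ (s_{i_l}^γ f))`. -/
def wordOp {N : ℕ} (γ : ℝ) (L : List ℕ) (f : Fn N) : Fn N :=
  L.foldr (fun j g => sSimple γ j g) f

/-- The simple transposition `s_j` (zero-based); identity for out-of-range `j`. -/
def simpleT (N : ℕ) (j : ℕ) : Equiv.Perm (Fin N) :=
  if h : j + 1 < N then Equiv.swap ⟨j, Nat.lt_of_succ_lt h⟩ ⟨j + 1, h⟩ else 1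

/-- The permutation represented by a word of simple reflections. -/
def wordPerm (N : ℕ) (L : List ℕ) : Equiv.Perm (Fin N) := (L.map (simpleT N)).prod

/-- `P` is the propagation operator `P^γ_N`: for continuous `f`, `P f` is continuous and
on the alcove `w⁻¹ ℝ^N_+` it equals `(w^γ f)(w x)`, where `w^γ` may be computed from any
word of simple reflections representing `w` (the operators `s_j^γ` satisfy the relations
of the symmetric group, so this does not depend on the word). -/
def IsPropagation {N : ℕ} (γ : ℝ) (P : Fn N → Fn N) : Prop :=
  ∀ f : Fn N, Continuous f →
    Continuous (P f) ∧
    ∀ (w : Equiv.Perm (Fin N)) (L : List ℕ),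
      (∀ j ∈ L, j + 1 < N) → wordPerm N L = w →
      ∀ x ∈ alcove w, P f x = wordOp γ L f (permPt w x)

open scoped Classical in
/-- The operator `Λ_j` entering the Dunkl-type operator `∂_j^γ = ∂_j - γ Λ_j`. -/
def LambdaOp {N : ℕ} (j : Fin N) (f : Fn N) : Fn N := fun x =>
  (∑ k : Fin N, if k < j ∧ x k < x j then f (permPt (Equiv.swap j k) x) else 0)
    - ∑ k : Fin N, if j < k ∧ x j < x k then f (permPt (Equiv.swap j k) x) else 0

/-- Membership in `CB^∞(ℝ^N)`: continuous, and smooth on every alcove. -/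
def CBsmooth {N : ℕ} (f : Fn N) : Prop :=
  Continuous f ∧ ∀ w : Equiv.Perm (Fin N), ContDiffOn ℝ (⊤ : ℕ∞) f (alcove w)

/-- Membership in `sol^γ_λ`: lies in `CB^∞(ℝ^N)` and satisfies `∂_j^γ f = iλ_j f`
on the regular vectors for every `j`. -/
def memSol {N : ℕ} (γ : ℝ) (lam : Fin N → ℂ) (f : Fn N) : Prop :=
  CBsmooth f ∧ ∀ j : Fin N, ∀ x ∈ regPts N,
    pd j f x - (γ : ℂ) * LambdaOp j f x = Complex.I * lam j * f x

open scoped Classical in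
/-- Coxeter length = number of inversions. -/
def invCount {N : ℕ} (w : Equiv.Perm (Fin N)) : ℕ :=
  (Finset.univ.filter fun p : Fin N × Fin N => p.1 < p.2 ∧ w p.2 < w p.1).card

/-- `x + δ(e_j - e_k)`. -/
def jumpShift {N : ℕ} (j k : Fin N) (δ : ℝ) (x : Pt N) : Pt N :=
  Function.update (Function.update x j (x j + δ)) k (x k - δ)

/-- The derivative jump conditions with coupling `γ`: at every subregular point of
every wall `{x_j = x_k}` (`j < k`), the jump of `(∂_j - ∂_k) f` equals `2γ f(x)`. -/
def SatisfiesJump {N : ℕ} (γ : ℝ) (f : Fn N) : Prop :=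
  ∀ j k : Fin N, j < k → ∀ x : Pt N, x j = x k →
    (∀ l m : Fin N, l < m → ¬(l = j ∧ m = k) → x l ≠ x m) →
    Filter.Tendsto
      (fun δ : ℝ =>
        (pd j f (jumpShift j k δ x) - pd k f (jumpShift j k δ x))
          - (pd j f (jumpShift j k (-δ) x) - pd k f (jumpShift j k (-δ) x)))
      (nhdsWithin 0 (Set.Ioi 0)) (nhds (2 * (γ : ℂ) * f x))

open scoped Classical in
/-- Indicator of a strictly decreasing chain of real numbers. -/
def chainInd (l : List ℝ) : ℂ := if List.Chain' (fun a b => b < a) l then 1 else 0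

/-- Iterated integral entering `ê⁻_{μ;i}`: for the list `[i₁,…,i_n]`, the upper limit of
the `y_m`-integral is `x_{i_{m-1}}` (threaded through `ub`, starting at `x_{N+1}`), the lower
limit is `x_{i_m}`, and the coordinate `i_m` of the argument is replaced by `y_m`. -/
def eMinusAux {N : ℕ} (μ : ℂ) (f : Fn N) (x : Pt (N + 1)) :
    List (Fin N) → ℝ → Pt N → ℂ
  | [], _, z => f z
  | i :: rest, ub, z =>
      ∫ y in (x i.castSucc)..ub,
        Complex.exp (Complex.I * μ * ((x i.castSucc - y : ℝ) : ℂ)) *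
          eMinusAux μ f x rest (x i.castSucc) (Function.update z i y)

/-- The elementary creation operator `ê⁻_{μ;i}`. -/
def ehatMinus {N : ℕ} (μ : ℂ) (l : List (Fin N)) (f : Fn N) : Fn (N + 1) :=
  fun x =>
    chainInd (x (Fin.last N) :: l.map fun i => x i.castSucc) *
      Complex.exp (Complex.I * μ * ((x (Fin.last N) : ℝ) : ℂ)) *
      eMinusAux μ f x l (x (Fin.last N)) (fun j => x j.castSucc)

/-- Iterated integral entering `ê⁺_{μ;i}`: the lower limit of the `y_m`-integral is
`x_{i_{m+1}+1}` (the coordinate of the next entry, or `x_1` at the end), the upper limit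
is `x_{i_m+1}`, and the coordinate `i_m` of the argument is replaced by `y_m`. -/
def ePlusAux {N : ℕ} (μ : ℂ) (f : Fn N) (x : Pt (N + 1)) :
    List (Fin N) → Pt N → ℂ
  | [], z => f z
  | i :: rest, z =>
      ∫ y in (match rest with
              | [] => x 0
              | j :: _ => x j.succ)..(x i.succ),
        Complex.exp (Complex.I * μ * ((x i.succ - y : ℝ) : ℂ)) *
          ePlusAux μ f x rest (Function.update z i y)

/-- The elementary creation operator `ê⁺_{μ;i}`. -/
def ehatPlus {N : ℕ} (μ : ℂ) (l : List (Fin N)) (f : Fn N) : Fn (N + 1) :=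
  fun x =>
    chainInd ((l.map fun i => x i.succ) ++ [x 0]) *
      Complex.exp (Complex.I * μ * ((x 0 : ℝ) : ℂ)) *
      ePlusAux μ f x l (fun j => x j.succ)

/-- The non-symmetric creation operator
`b⁻_μ = ∑_{n=0}^N γⁿ ∑_{i ∈ 𝔦ⁿ_{[1,N]}} ê⁻_{μ;i}` (tuples of pairwise distinct indices
are encoded as injections `Fin n ↪ Fin N`). -/
def bMinus {N : ℕ} (γ : ℝ) (μ : ℂ) (f : Fn N) : Fn (N + 1) :=
  fun x => ∑ n ∈ Finset.range (N + 1), (γ : ℂ) ^ n *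
    ∑ e : Fin n ↪ Fin N, ehatMinus μ (List.ofFn ⇑e) f x

/-- The non-symmetric creation operator `b⁺_μ`. -/
def bPlus {N : ℕ} (γ : ℝ) (μ : ℂ) (f : Fn N) : Fn (N + 1) :=
  fun x => ∑ n ∈ Finset.range (N + 1), (γ : ℂ) ^ n *
    ∑ e : Fin n ↪ Fin N, ehatPlus μ (List.ofFn ⇑e) f x

/-- `φ̌⁺`: evaluate the first coordinate at `x⁺`. -/
def phiCheckPlus {k : ℕ} (xp : ℝ) (f : Fn (k + 1)) : Fn k := fun x => f (Fin.cons xp x)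

/-- `φ̌⁻`: evaluate the last coordinate at `x⁻`. -/
def phiCheckMinus {k : ℕ} (xm : ℝ) (f : Fn (k + 1)) : Fn k := fun x => f (Fin.snoc x xm)

/-- `b^ε_μ`, `ε = +` encoded as `true` and `ε = -` as `false`. -/
def bEps (ε : Bool) {k : ℕ} (γ : ℝ) (μ : ℂ) (f : Fn k) : Fn (k + 1) :=
  if ε then bPlus γ μ f else bMinus γ μ f

/-- `ê^ε_{μ;i}`. -/
def ehatEps (ε : Bool) {N : ℕ} (μ : ℂ) (l : List (Fin N)) (f : Fn N) : Fn (N + 1) :=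
  if ε then ehatPlus μ l f else ehatMinus μ l f

/-- `φ̌^ε`. -/
def phiEps (ε : Bool) {k : ℕ} (xp xm : ℝ) (f : Fn (k + 1)) : Fn k :=
  if ε then phiCheckPlus xp f else phiCheckMinus xm f

/-- `a^ε_μ = φ̌^ε ∘ b^ε_μ`. -/
def aEps (ε : Bool) {k : ℕ} (γ : ℝ) (xp xm : ℝ) (μ : ℂ) (f : Fn k) : Fn k :=
  phiEps ε xp xm (bEps ε γ μ f)

/-- The sign `ε = ±1` of `ε ∈ {+,-}`. -/
def sgn (ε : Bool) : ℂ := if ε then 1 else -1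

/-- `s⁺` (swap of the first two coordinates of `ℝ^{N+2}`) resp. `s⁻` (swap of the last two). -/
def sEps (ε : Bool) (N : ℕ) : Equiv.Perm (Fin (N + 2)) :=
  if ε then Equiv.swap 0 1 else Equiv.swap ⟨N, by omega⟩ ⟨N + 1, by omega⟩

/-- Iterated integral entering `č⁺_{μ;i}` (the variables `y_1,…,y_n`). -/
def cAuxPlus {N : ℕ} (μ : ℂ) (xp : ℝ) (x : Pt N) (g : Pt N → ℂ) :
    List (Fin N) → Pt N → ℂ
  | [], z => g z
  | i :: rest, z =>
      ∫ y in (match rest with | [] => xp | j :: _ => x j)..(x i),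
        Complex.exp (Complex.I * μ * ((x i - y : ℝ) : ℂ)) *
          cAuxPlus μ xp x g rest (Function.update z i y)

/-- The elementary operator `č⁺_{μ;i}` (with `x_{i_0} := x⁻` and `x_{i_{n+1}} := x⁺`;
the variable `y_0` is plugged in as the final argument of `f`). -/
def cCheckPlus {N : ℕ} (μ : ℂ) (xp xm : ℝ) (l : List (Fin N)) (f : Fn (N + 1)) : Fn N :=
  fun x =>
    chainInd (l.map x) * Complex.exp (Complex.I * μ * ((xp : ℝ) : ℂ)) *
      ∫ y0 in (match l with | [] => xp | i :: _ => x i)..xm,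
        Complex.exp (Complex.I * μ * ((xm - y0 : ℝ) : ℂ)) *
          cAuxPlus μ xp x (fun z => f (Fin.snoc z y0)) l x

/-- Iterated integral entering `č⁻_{μ;i}` (the variables `y_1,…,y_{n+1}`;
the variable `y_{n+1}` is plugged in as the first argument of `f`). -/
def cAuxMinus {N : ℕ} (μ : ℂ) (xp : ℝ) (x : Pt N) (f : Fn (N + 1)) :
    List (Fin N) → ℝ → Pt N → ℂ
  | [], ub, z =>
      ∫ y in xp..ub, Complex.exp (Complex.I * μ * ((xp - y : ℝ) : ℂ)) * f (Fin.cons y z)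
  | i :: rest, ub, z =>
      ∫ y in (x i)..ub,
        Complex.exp (Complex.I * μ * ((x i - y : ℝ) : ℂ)) *
          cAuxMinus μ xp x f rest (x i) (Function.update z i y)

/-- The elementary operator `č⁻_{μ;i}` (with `x_{i_0} := x⁻` and `x_{i_{n+1}} := x⁺`). -/
def cCheckMinus {N : ℕ} (μ : ℂ) (xp xm : ℝ) (l : List (Fin N)) (f : Fn (N + 1)) : Fn N :=
  fun x => chainInd (l.map x) * Complex.exp (Complex.I * μ * ((xm : ℝ) : ℂ)) *
    cAuxMinus μ xp x f l xm x

/-- `č^ε_{μ;i}`. -/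
def cCheckEps (ε : Bool) {N : ℕ} (μ : ℂ) (xp xm : ℝ) (l : List (Fin N)) (f : Fn (N + 1)) :
    Fn N :=
  if ε then cCheckPlus μ xp xm l f else cCheckMinus μ xp xm l f

/-- The operator `c⁺_μ = ∑_{n=0}^N γ^{n+1} ∑_i č⁺_{μ;i}`. -/
def cPlusOp {N : ℕ} (γ : ℝ) (μ : ℂ) (xp xm : ℝ) (f : Fn (N + 1)) : Fn N :=
  fun x => ∑ n ∈ Finset.range (N + 1), (γ : ℂ) ^ (n + 1) *
    ∑ e : Fin n ↪ Fin N, cCheckPlus μ xp xm (List.ofFn ⇑e) f x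

/-- The operator `c⁻_μ = ∑_{n=0}^N γ^{n+1} ∑_i č⁻_{μ;i}`. -/
def cMinusOp {N : ℕ} (γ : ℝ) (μ : ℂ) (xp xm : ℝ) (f : Fn (N + 1)) : Fn N :=
  fun x => ∑ n ∈ Finset.range (N + 1), (γ : ℂ) ^ (n + 1) *
    ∑ e : Fin n ↪ Fin N, cCheckMinus μ xp xm (List.ofFn ⇑e) f x

/-- `c^ε_μ`. -/
def cEps (ε : Bool) {N : ℕ} (γ : ℝ) (μ : ℂ) (xp xm : ℝ) (f : Fn (N + 1)) : Fn N :=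
  if ε then cPlusOp γ μ xp xm f else cMinusOp γ μ xp xm f

/-- The closed box `J^M = [x⁺,x⁻]^M`. -/
def box (M : ℕ) (xp xm : ℝ) : Set (Pt M) := {x | ∀ j, x j ∈ Set.Icc xp xm}

/-- The `L²(J^M)` inner product `⟨u,v⟩_M = ∫_{J^M} u · conj v`. -/
def ipJ {M : ℕ} (xp xm : ℝ) (u v : Fn M) : ℂ :=
  ∫ x in box M xp xm, u x * (starRingEnd ℂ) (v x)

/-- Smooth functions compactly supported in the open box `(x⁺,x⁻)^M`. -/
def IsTestFn {M : ℕ} (xp xm : ℝ) (f : Fn M) : Prop :=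
  ContDiff ℝ (⊤ : ℕ∞) f ∧ HasCompactSupport f ∧ ∀ x, f x ≠ 0 → ∀ j, x j ∈ Set.Ioo xp xm

/-- The symmetrizer `𝒮_N = (1/N!) ∑_{w ∈ S_N} w`. -/
def symN (N : ℕ) (f : Fn N) : Fn N :=
  fun x => (N.factorial : ℂ)⁻¹ * ∑ w : Equiv.Perm (Fin N), f (permPt w⁻¹ x)

open scoped Classical in
/-- `G^γ_μ = ∏_{j<k} (μ_j - μ_k - iγ)/(μ_j - μ_k)`. -/
def Gcoef {N : ℕ} (γ : ℝ) (mu : Fin N → ℂ) : ℂ :=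
  ∏ p ∈ Finset.univ.filter (fun p : Fin N × Fin N => p.1 < p.2),
    (mu p.1 - mu p.2 - Complex.I * (γ : ℂ)) / (mu p.1 - mu p.2)

/-- The decreasing rearrangement `x↓`. -/
def decRearrange {N : ℕ} (x : Pt N) : Pt N := fun j => x (Tuple.sort x (Fin.rev j))

/-- The Bethe wavefunction
`Ψ_λ(x) = (1/N!) ∑_{w ∈ S_N} G^γ_{wλ} exp(i ∑_j (wλ)_j (x↓)_j)`. -/
def Bethe {N : ℕ} (γ : ℝ) (lam : Fin N → ℂ) : Fn N :=
  fun x => (N.factorial : ℂ)⁻¹ * ∑ w : Equiv.Perm (Fin N),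
    Gcoef γ (fun j => lam (w⁻¹ j)) *
      Complex.exp (Complex.I * ∑ j, lam (w⁻¹ j) * ((decRearrange x j : ℝ) : ℂ))

/-- The transpositions of consecutive entries of a list:
`adjSwaps [a₁,…,a_m] = [(a₁ a₂), (a₂ a₃), …, (a_{m-1} a_m)]`. -/
def adjSwaps {M : ℕ} : List (Fin M) → List (Equiv.Perm (Fin M))
  | [] => []
  | [_] => []
  | a :: b :: rest => Equiv.swap a b :: adjSwaps (b :: rest)

/-- `b⁻_{λ_N} (b⁻_{λ_{N-1}} (⋯ (b⁻_{λ_1} 1)))`. -/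
def iterBMinus (γ : ℝ) : (N : ℕ) → (Fin N → ℂ) → Fn N
  | 0, _ => fun _ => 1
  | N + 1, lam => bMinus γ (lam (Fin.last N)) (iterBMinus γ N (fun j => lam j.castSucc))

/-- `b⁺_{λ_1} (b⁺_{λ_2} (⋯ (b⁺_{λ_N} 1)))`. -/
def iterBPlus (γ : ℝ) : (N : ℕ) → (Fin N → ℂ) → Fn N
  | 0, _ => fun _ => 1
  | N + 1, lam => bPlus γ (lam 0) (iterBPlus γ N (fun j => lam j.succ))

/-!
Near a regular point the signs entering `Λ_j` are locally constant, so the Dunkl equation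
`∂_j f = iλ_j f + γ Λ_j f` can be differentiated once more, and `∂_j² f` can be expanded by
substituting the Dunkl equation twice. Summed over `j`, the terms of order `γ` cancel by
antisymmetry in the pair `(j, k)`, and those of order `γ²` cancel because the products of
signs satisfy a three-term cyclic identity while the reflected points `s_{km} s_{jk} x` are
invariant under cyclic rotation of distinct `j, k, m`.

At a subregular point of the wall `x_j = x_k`, crossing the wall changes only the sign of the
`(j, k)`-term of `Λ_j` (by one) and of the `(k, j)`-term of `Λ_k` (by minus one), so by
continuity of `f` the Dunkl equation turns into the jump `2γ f(x)` of `(∂_j - ∂_k) f`.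
-/

open Filter Topology

section SignedSums

theorem sum_sum_sum_rotate {ι M : Type*} [Fintype ι] [AddCommMonoid M] (G : ι → ι → ι → M) :
    ∑ i, ∑ j, ∑ k, G k i j = ∑ i, ∑ j, ∑ k, G i j k := by
  calc ∑ i, ∑ j, ∑ k, G k i j = ∑ i, ∑ k, ∑ j, G k i j :=
        Finset.sum_congr rfl fun _ _ => Finset.sum_comm
    _ = ∑ k, ∑ i, ∑ j, G k i j := Finset.sum_comm

variable {ι M : Type*} [Fintype ι] [AddCommGroup M] [IsAddTorsionFree M]

theorem sum_sum_eq_zero_of_antisymm (g : ι → ι → M) (hg : ∀ i j, g j i = -g i j) :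
    ∑ i, ∑ j, g i j = 0 := by
  refine self_eq_neg.mp ?_
  calc ∑ i, ∑ j, g i j = ∑ j, ∑ i, g i j := Finset.sum_comm
    _ = ∑ i, ∑ j, -g i j := Fintype.sum_congr _ _ fun i => Fintype.sum_congr _ _ fun j => hg i j
    _ = -∑ i, ∑ j, g i j := by simp only [Finset.sum_neg_distrib]

theorem sum_smul_eq_zero_of_cyclic {R : Type*} [Semiring R] [Module R M]
    (c : ι → ι → ι → R) (F : ι → ι → ι → M)
    (hc₀ : ∀ i j k, c i j k ≠ 0 → i ≠ j ∧ j ≠ k ∧ k ≠ i)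
    (hc : ∀ i j k, i ≠ j → j ≠ k → k ≠ i → c i j k + c k i j + c j k i = 0)
    (hF : ∀ i j k, i ≠ j → j ≠ k → k ≠ i → F k i j = F i j k) :
    ∑ i, ∑ j, ∑ k, c i j k • F i j k = 0 := by
  set S := ∑ i, ∑ j, ∑ k, c i j k • F i j k
  have hrot₁ : S = ∑ i, ∑ j, ∑ k, c k i j • F i j k := by
    rw [show S = ∑ i, ∑ j, ∑ k, c k i j • F k i j from
      (sum_sum_sum_rotate fun i j k => c i j k • F i j k).symm]
    refine Fintype.sum_congr _ _ fun i => Fintype.sum_congr _ _ fun j =>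
      Fintype.sum_congr _ _ fun k => ?_
    by_cases h : c k i j = 0
    · simp [h]
    · obtain ⟨hki, hij, hjk⟩ := hc₀ k i j h
      rw [hF i j k hij hjk hki]
  have hrot₂ : S = ∑ i, ∑ j, ∑ k, c j k i • F i j k := by
    rw [show S = ∑ i, ∑ j, ∑ k, c j k i • F j k i from
      sum_sum_sum_rotate fun i j k => c j k i • F j k i]
    refine Fintype.sum_congr _ _ fun i => Fintype.sum_congr _ _ fun j =>
      Fintype.sum_congr _ _ fun k => ?_
    by_cases h : c j k i = 0
    · simp [h]
    · obtain ⟨hjk, hki, hij⟩ := hc₀ j k i h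
      rw [hF k i j hki hij hjk, hF i j k hij hjk hki]
  have hsum : ∑ i, ∑ j, ∑ k, (c i j k + c k i j + c j k i) • F i j k = 0 := by
    refine Fintype.sum_eq_zero _ fun i => Fintype.sum_eq_zero _ fun j =>
      Fintype.sum_eq_zero _ fun k => ?_
    by_cases hd : i ≠ j ∧ j ≠ k ∧ k ≠ i
    · rw [hc i j k hd.1 hd.2.1 hd.2.2, zero_smul]
    · have h₀ : ∀ a b l, ¬(a ≠ b ∧ b ≠ l ∧ l ≠ a) → c a b l = 0 := fun a b l h =>
        by_contra fun hne => h (hc₀ a b l hne)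
      rw [h₀ i j k hd, h₀ k i j (by tauto), h₀ j k i (by tauto), add_zero, add_zero,
        zero_smul]
  simp only [add_smul, Finset.sum_add_distrib, ← hrot₁, ← hrot₂] at hsum
  have h3 : (3 : ℕ) • S = 0 := by rw [succ_nsmul, succ_nsmul, one_nsmul]; exact hsum
  simpa using h3

end SignedSums

section Points

variable {N : ℕ}

theorem permPt_swap_apply (j k a : Fin N) (x : Pt N) :
    permPt (Equiv.swap j k) x a = x (Equiv.swap j k a) := by
  simp [permPt]

theorem permPt_permPt (σ τ : Equiv.Perm (Fin N)) (x : Pt N) :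
    permPt σ (permPt τ x) = permPt (σ * τ) x := by
  ext a
  simp [permPt]

theorem permPt_swap_update (j k : Fin N) (x : Pt N) (t : ℝ) :
    permPt (Equiv.swap j k) (Function.update x j t)
      = Function.update (permPt (Equiv.swap j k) x) k t := by
  ext a
  simp only [permPt_swap_apply, Function.update_apply, Equiv.swap_apply_eq_iff,
    Equiv.swap_apply_left]

theorem permPt_swap_of_eq {j k : Fin N} {x : Pt N} (h : x j = x k) :
    permPt (Equiv.swap j k) x = x := by
  ext a
  rw [permPt_swap_apply]
  rcases eq_or_ne a j with rfl | haj
  · rw [Equiv.swap_apply_left, h]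
  rcases eq_or_ne a k with rfl | hak
  · rw [Equiv.swap_apply_right, h]
  · rw [Equiv.swap_apply_of_ne_of_ne haj hak]

theorem continuous_permPt (w : Equiv.Perm (Fin N)) : Continuous (permPt w) :=
  continuous_pi fun _ => continuous_apply _

theorem permPt_mem_regPts {x : Pt N} (hx : x ∈ regPts N) (w : Equiv.Perm (Fin N)) :
    permPt w x ∈ regPts N :=
  fun _ _ hab => hx _ _ fun h => hab (by simpa using congrArg w h)

theorem isOpen_regPts (N : ℕ) : IsOpen (regPts N) := by
  simp only [regPts, Set.ofPred_forall]
  exact isOpen_iInter_of_finite fun a => isOpen_iInter_of_finite fun b =>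
    isOpen_iInter_of_finite fun _ => isOpen_ne_fun (continuous_apply a) (continuous_apply b)

theorem isOpen_alcove (w : Equiv.Perm (Fin N)) : IsOpen (alcove w) := by
  refine IsOpen.preimage (continuous_permPt w) ?_
  simp only [posAlcove, Set.ofPred_forall]
  refine isOpen_iInter_of_finite fun i => isOpen_iInter_of_finite fun j => ?_
  by_cases hij : i < j
  · simpa [hij] using isOpen_lt (continuous_apply j) (continuous_apply i)
  · simp [hij]

/-- A regular point lies in the alcove of the permutation sorting its coordinates. -/
theorem exists_mem_alcove {x : Pt N} (hx : x ∈ regPts N) : ∃ w, x ∈ alcove w := by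
  refine ⟨(Fin.revPerm.trans (Tuple.sort x))⁻¹, fun i j hij => ?_⟩
  have hq : ∀ a, permPt (Fin.revPerm.trans (Tuple.sort x))⁻¹ x a = x (Tuple.sort x a.rev) := by
    intro a; simp [permPt]
  rw [hq, hq]
  have hrev : j.rev < i.rev := Fin.rev_lt_rev.mpr hij
  exact (Tuple.monotone_sort x hrev.le).lt_of_ne
    (hx _ _ fun h => hrev.ne ((Tuple.sort x).injective h))

def lambdaSign (j k : Fin N) (x : Pt N) : ℂ :=
  (if k < j ∧ x k < x j then 1 else 0) - (if j < k ∧ x j < x k then 1 else 0)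

theorem lambdaSign_self (j : Fin N) (x : Pt N) : lambdaSign j j x = 0 := by
  simp [lambdaSign]

theorem lambdaSign_comm (j k : Fin N) (x : Pt N) : lambdaSign k j x = -lambdaSign j k x := by
  simp only [lambdaSign]; ring

theorem lambdaSign_of_lt {j k : Fin N} {x : Pt N} (h : x k < x j) :
    lambdaSign j k x = if k < j then 1 else 0 := by
  simp [lambdaSign, h, h.not_gt]

theorem lambdaSign_of_gt {j k : Fin N} {x : Pt N} (h : x j < x k) :
    lambdaSign j k x = if j < k then -1 else 0 := by
  rw [lambdaSign_comm, lambdaSign_of_lt h]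
  split_ifs <;> simp

theorem lambdaOp_eq_sum (j : Fin N) (f : Fn N) (x : Pt N) :
    LambdaOp j f x = ∑ k, lambdaSign j k x * f (permPt (Equiv.swap j k) x) := by
  simp only [LambdaOp, lambdaSign, sub_mul, ite_mul, one_mul, zero_mul, Finset.sum_sub_distrib]

theorem lambdaSign_eventuallyEq {a b : Fin N} {x : Pt N} (h : a ≠ b → x a ≠ x b) :
    ∀ᶠ y in 𝓝 x, lambdaSign a b y = lambdaSign a b x := by
  rcases eq_or_ne a b with rfl | hab
  · simp [lambdaSign_self]
  rcases (h hab).lt_or_gt with hlt | hlt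
  · filter_upwards [(continuous_apply a).continuousAt.eventually_lt
      (continuous_apply b).continuousAt hlt] with y hy
    rw [lambdaSign_of_gt hy, lambdaSign_of_gt hlt]
  · filter_upwards [(continuous_apply b).continuousAt.eventually_lt
      (continuous_apply a).continuousAt hlt] with y hy
    rw [lambdaSign_of_lt hy, lambdaSign_of_lt hlt]

theorem CBsmooth.differentiableAt {f : Fn N} (hf : CBsmooth f) {x : Pt N}
    (hx : x ∈ regPts N) : DifferentiableAt ℝ f x := by
  obtain ⟨w, hw⟩ := exists_mem_alcove hx
  exact ((hf.2 w).contDiffAt ((isOpen_alcove w).mem_nhds hw)).differentiableAt (by simp)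

theorem CBsmooth.hasDerivAt_update {f : Fn N} (hf : CBsmooth f) {y : Pt N}
    (hy : y ∈ regPts N) (k : Fin N) :
    HasDerivAt (fun t : ℝ => f (Function.update y k t)) (pd k f y) (y k) := by
  have hfy : DifferentiableAt ℝ f (Function.update y k (y k)) := by
    rw [Function.update_eq_self]; exact hf.differentiableAt hy
  exact (hfy.comp (y k) (_root_.hasDerivAt_update y k (y k)).differentiableAt).hasDerivAt

variable {γ : ℝ} {lam : Fin N → ℂ} {f : Fn N}

theorem memSol.pd_eq (hf : memSol γ lam f) {y : Pt N} (hy : y ∈ regPts N) (j : Fin N) :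
    pd j f y = Complex.I * lam j * f y + γ * LambdaOp j f y := by
  linear_combination hf.2 j y hy

theorem memSol.eventually_pd_eq (hf : memSol γ lam f) {x : Pt N} (hx : x ∈ regPts N)
    (j : Fin N) :
    ∀ᶠ y in 𝓝 x, pd j f y = Complex.I * lam j * f y
      + γ * ∑ k, lambdaSign j k x * f (permPt (Equiv.swap j k) y) := by
  filter_upwards [(isOpen_regPts N).mem_nhds hx,
    eventually_all.mpr fun k => lambdaSign_eventuallyEq (a := j) (b := k) (hx j k)]
    with y hy hsign
  simp only [hf.pd_eq hy, lambdaOp_eq_sum, hsign]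

theorem memSol.pd_pd_eq (hf : memSol γ lam f) {x : Pt N} (hx : x ∈ regPts N) (j : Fin N) :
    pd j (pd j f) x = Complex.I * lam j * pd j f x
      + γ * ∑ k, lambdaSign j k x * pd k f (permPt (Equiv.swap j k) x) := by
  have hslice : Tendsto (fun t : ℝ => Function.update x j t) (𝓝 (x j)) (𝓝 x) :=
    (continuous_const.update j continuous_id).tendsto' _ _ (Function.update_eq_self j x)
  have hloc := hslice.eventually (hf.eventually_pd_eq hx j)
  simp only [permPt_swap_update] at hloc
  have hderiv : ∀ k,
      HasDerivAt (fun t : ℝ => f (Function.update (permPt (Equiv.swap j k) x) k t))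
        (pd k f (permPt (Equiv.swap j k) x)) (x j) := fun k => by
    simpa [permPt_swap_apply] using
      hf.1.hasDerivAt_update (permPt_mem_regPts hx (Equiv.swap j k)) k
  have hG := ((hf.1.hasDerivAt_update hx j).const_mul (Complex.I * lam j)).add
    ((HasDerivAt.fun_sum (u := Finset.univ) fun k _ =>
      (hderiv k).const_mul (lambdaSign j k x)).const_mul (γ : ℂ))
  exact (Filter.EventuallyEq.deriv_eq hloc).trans hG.deriv

end Points

section Helmholtz

variable {N : ℕ}

theorem lambdaSign_mul_lambdaSign_swap (a b : Fin N) (x : Pt N) :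
    lambdaSign a b x * lambdaSign b a (permPt (Equiv.swap a b) x) = 0 := by
  rcases eq_or_ne a b with rfl | hab
  · rw [lambdaSign_self, zero_mul]
  simp only [lambdaSign, permPt_swap_apply, Equiv.swap_apply_left, Equiv.swap_apply_right]
  rcases hab.lt_or_gt with h | h <;> rcases lt_trichotomy (x a) (x b) with hv | hv | hv <;>
    simp [h, hv, h.not_gt, hv.not_gt]

theorem lambdaSign_cyclic {x : Pt N} (hx : x ∈ regPts N) {a b c : Fin N}
    (hab : a ≠ b) (hbc : b ≠ c) (hca : c ≠ a) :
    lambdaSign a b x * lambdaSign b c (permPt (Equiv.swap a b) x)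
      + lambdaSign c a x * lambdaSign a b (permPt (Equiv.swap c a) x)
      + lambdaSign b c x * lambdaSign c a (permPt (Equiv.swap b c) x) = 0 := by
  simp only [lambdaSign, permPt_swap_apply, Equiv.swap_apply_right,
    Equiv.swap_apply_of_ne_of_ne hca hbc.symm, Equiv.swap_apply_of_ne_of_ne hbc hab.symm,
    Equiv.swap_apply_of_ne_of_ne hab hca.symm]
  rcases hab.lt_or_gt with i1 | i1 <;> rcases hbc.lt_or_gt with i2 | i2 <;>
    rcases hca.lt_or_gt with i3 | i3 <;> rcases (hx a b hab).lt_or_gt with v1 | v1 <;>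
    rcases (hx b c hbc).lt_or_gt with v2 | v2 <;> rcases (hx c a hca).lt_or_gt with v3 | v3 <;>
    simp [i1, i2, i3, v1, v2, v3, i1.not_gt, i2.not_gt, i3.not_gt, v1.not_gt, v2.not_gt,
      v3.not_gt] <;>
    first | omega | linarith

theorem permPt_swap_swap_rotate {a b c : Fin N} (hbc : b ≠ c) (hca : c ≠ a)
    (x : Pt N) :
    permPt (Equiv.swap a b) (permPt (Equiv.swap c a) x)
      = permPt (Equiv.swap b c) (permPt (Equiv.swap a b) x) := by
  rw [permPt_permPt, permPt_permPt, Equiv.mul_swap_eq_swap_mul, Equiv.swap_apply_left,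
    Equiv.swap_apply_of_ne_of_ne hca hbc.symm, Equiv.swap_comm c b]

theorem sum_lambdaSign_mul_lambdaSign_eq_zero {x : Pt N} (hx : x ∈ regPts N) (f : Fn N) :
    ∑ a, ∑ b, ∑ c, lambdaSign a b x * lambdaSign b c (permPt (Equiv.swap a b) x)
      * f (permPt (Equiv.swap b c) (permPt (Equiv.swap a b) x)) = 0 := by
  have hc₀ : ∀ a b c : Fin N,
      lambdaSign a b x * lambdaSign b c (permPt (Equiv.swap a b) x) ≠ 0 →
        a ≠ b ∧ b ≠ c ∧ c ≠ a := by
    refine fun a b c h => ⟨?_, ?_, ?_⟩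
    · rintro rfl; simp [lambdaSign_self] at h
    · rintro rfl; simp [lambdaSign_self] at h
    · rintro rfl; exact h (lambdaSign_mul_lambdaSign_swap _ _ x)
  simpa only [smul_eq_mul] using sum_smul_eq_zero_of_cyclic _
    (fun a b c => f (permPt (Equiv.swap b c) (permPt (Equiv.swap a b) x))) hc₀
    (fun a b c => lambdaSign_cyclic hx) (fun a b c _ hbc hca => by
      simp only [permPt_swap_swap_rotate hbc hca])

theorem sum_lambdaSign_antisymm_eq_zero (lam : Fin N → ℂ) (f : Fn N) (x : Pt N) :
    ∑ j, ∑ k, Complex.I * (lam j + lam k)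
      * (lambdaSign j k x * f (permPt (Equiv.swap j k) x)) = 0 :=
  sum_sum_eq_zero_of_antisymm _ fun j k => by
    rw [lambdaSign_comm, Equiv.swap_comm]; ring

theorem memSol.helmholtz {γ : ℝ} {lam : Fin N → ℂ} {f : Fn N} (hf : memSol γ lam f)
    {x : Pt N} (hx : x ∈ regPts N) :
    -(∑ j, pd j (pd j f) x) = (∑ j, lam j ^ 2) * f x := by
  have hexpand : ∀ j, pd j (pd j f) x = -(lam j ^ 2 * f x)
      + γ * ∑ k, Complex.I * (lam j + lam k)
          * (lambdaSign j k x * f (permPt (Equiv.swap j k) x))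
      + γ ^ 2 * ∑ k, ∑ m, lambdaSign j k x * lambdaSign k m (permPt (Equiv.swap j k) x)
          * f (permPt (Equiv.swap k m) (permPt (Equiv.swap j k) x)) := by
    intro j
    simp only [hf.pd_pd_eq hx, hf.pd_eq hx, hf.pd_eq (permPt_mem_regPts hx _), lambdaOp_eq_sum,
      mul_add, add_mul, Finset.mul_sum, Finset.sum_add_distrib]
    have hI : Complex.I * lam j * (Complex.I * lam j * f x) = -(lam j ^ 2 * f x) := by
      linear_combination (lam j ^ 2 * f x) * Complex.I_sq
    rw [hI]
    have hk : ∀ k,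
        (γ : ℂ) * (lambdaSign j k x * (Complex.I * lam k * f (permPt (Equiv.swap j k) x)))
          = γ * (Complex.I * lam k * (lambdaSign j k x * f (permPt (Equiv.swap j k) x))) :=
      fun k => by ring
    simp only [hk]
    ring_nf
  simp only [hexpand, Finset.sum_add_distrib, ← Finset.mul_sum, Finset.sum_neg_distrib,
    sum_lambdaSign_antisymm_eq_zero, sum_lambdaSign_mul_lambdaSign_eq_zero hx, Finset.sum_mul]
  simp

end Helmholtz

section Jump

variable {N : ℕ} {j k : Fin N} {x : Pt N}

theorem jumpShift_apply_left (hjk : j ≠ k) (δ : ℝ) (x : Pt N) :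
    jumpShift j k δ x j = x j + δ := by
  simp [jumpShift, hjk]

theorem jumpShift_apply_right (j k : Fin N) (δ : ℝ) (x : Pt N) :
    jumpShift j k δ x k = x k - δ := by
  simp [jumpShift]

theorem jumpShift_apply_of_ne {a : Fin N} (haj : a ≠ j) (hak : a ≠ k) (δ : ℝ) (x : Pt N) :
    jumpShift j k δ x a = x a := by
  simp [jumpShift, haj, hak]

theorem jumpShift_neg (hjk : j ≠ k) (δ : ℝ) (x : Pt N) :
    jumpShift j k (-δ) x = jumpShift k j δ x := by
  ext a
  rcases eq_or_ne a j with rfl | haj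
  · rw [jumpShift_apply_left hjk, jumpShift_apply_right]; ring
  rcases eq_or_ne a k with rfl | hak
  · rw [jumpShift_apply_right, jumpShift_apply_left hjk.symm]; ring
  · rw [jumpShift_apply_of_ne haj hak, jumpShift_apply_of_ne hak haj]

theorem tendsto_jumpShift (j k : Fin N) (x : Pt N) :
    Tendsto (fun δ => jumpShift j k δ x) (𝓝 0) (𝓝 x) :=
  ((continuous_const.update j (continuous_const.add continuous_id)).update k
    (continuous_const.sub continuous_id)).tendsto' _ _ (by simp)

theorem eventually_jumpShift_mem_regPts (hjk : j ≠ k) (hwall : x j = x k)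
    (hsub : ∀ a b, a ≠ b → s(a, b) ≠ s(j, k) → x a ≠ x b) :
    ∀ᶠ δ in 𝓝[>] 0, jumpShift j k δ x ∈ regPts N := by
  simp only [regPts, Set.mem_ofPred_eq, eventually_all]
  intro a b hab
  by_cases hjk' : s(a, b) = s(j, k)
  · filter_upwards [self_mem_nhdsWithin] with δ (hδ : 0 < δ)
    rcases Sym2.eq_iff.mp hjk' with ⟨rfl, rfl⟩ | ⟨rfl, rfl⟩
    · rw [jumpShift_apply_left hjk, jumpShift_apply_right, hwall]; linarith
    · rw [jumpShift_apply_left hjk, jumpShift_apply_right, hwall]; linarith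
  · exact nhdsWithin_le_nhds <| (tendsto_jumpShift j k x).eventually <|
      (isOpen_ne_fun (Y := Pt N) (continuous_apply a) (continuous_apply b)).mem_nhds
        (hsub a b hab hjk')

theorem Continuous.tendsto_jumpShift {Y : Type*} [TopologicalSpace Y] {g : Pt N → Y}
    (hg : Continuous g) (j k : Fin N) (x : Pt N) :
    Tendsto (fun δ => g (jumpShift j k δ x)) (𝓝[>] 0) (𝓝 (g x)) :=
  (hg.tendsto x).comp ((_root_.tendsto_jumpShift j k x).mono_left nhdsWithin_le_nhds)

variable {f : Fn N}

theorem tendsto_comp_permPt_jumpShift (hf : Continuous f) (w : Equiv.Perm (Fin N))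
    (j k : Fin N) (x : Pt N) :
    Tendsto (fun δ => f (permPt w (jumpShift j k δ x))) (𝓝[>] 0) (𝓝 (f (permPt w x))) :=
  (hf.comp (continuous_permPt w)).tendsto_jumpShift j k x

theorem tendsto_lambdaSign_mul_jumpShift_sub_of_wall (hf : Continuous f) (hjk : j ≠ k)
    (hwall : x j = x k) :
    Tendsto (fun δ => lambdaSign j k (jumpShift j k δ x)
        * f (permPt (Equiv.swap j k) (jumpShift j k δ x))
        - lambdaSign j k (jumpShift k j δ x) * f (permPt (Equiv.swap j k) (jumpShift k j δ x)))
      (𝓝[>] 0) (𝓝 (f x)) := by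
  have hsign : ∀ᶠ δ in 𝓝[>] 0,
      (if k < j then 1 else 0) * f (permPt (Equiv.swap j k) (jumpShift j k δ x))
        - (if j < k then -1 else 0) * f (permPt (Equiv.swap j k) (jumpShift k j δ x))
      = lambdaSign j k (jumpShift j k δ x) * f (permPt (Equiv.swap j k) (jumpShift j k δ x))
        - lambdaSign j k (jumpShift k j δ x)
          * f (permPt (Equiv.swap j k) (jumpShift k j δ x)) := by
    filter_upwards [self_mem_nhdsWithin] with δ (hδ : 0 < δ)
    rw [lambdaSign_of_lt, lambdaSign_of_gt] <;>
      simp only [jumpShift_apply_left hjk, jumpShift_apply_left hjk.symm,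
        jumpShift_apply_right, hwall] <;> linarith
  have hcoef : ((if k < j then 1 else 0) - (if j < k then -1 else 0) : ℂ) = 1 := by
    rcases hjk.lt_or_gt with h | h <;> simp [h, h.not_gt]
  have hlim := ((tendsto_comp_permPt_jumpShift hf (Equiv.swap j k) j k x).const_mul
      (if k < j then 1 else 0 : ℂ)).sub
    ((tendsto_comp_permPt_jumpShift hf (Equiv.swap j k) k j x).const_mul
      (if j < k then -1 else 0 : ℂ))
  rw [permPt_swap_of_eq hwall, ← sub_mul, hcoef, one_mul] at hlim
  exact hlim.congr' hsign

theorem tendsto_lambdaSign_mul_jumpShift_sub_of_ne (hf : Continuous f) {b : Fin N}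
    (hjb : j ≠ b → x j ≠ x b) :
    Tendsto (fun δ => lambdaSign j b (jumpShift j k δ x)
        * f (permPt (Equiv.swap j b) (jumpShift j k δ x))
        - lambdaSign j b (jumpShift k j δ x) * f (permPt (Equiv.swap j b) (jumpShift k j δ x)))
      (𝓝[>] 0) (𝓝 0) := by
  have hconst := lambdaSign_eventuallyEq hjb
  have hsign : ∀ᶠ δ in 𝓝[>] 0,
      lambdaSign j b x * f (permPt (Equiv.swap j b) (jumpShift j k δ x))
        - lambdaSign j b x * f (permPt (Equiv.swap j b) (jumpShift k j δ x))
      = lambdaSign j b (jumpShift j k δ x) * f (permPt (Equiv.swap j b) (jumpShift j k δ x))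
        - lambdaSign j b (jumpShift k j δ x)
          * f (permPt (Equiv.swap j b) (jumpShift k j δ x)) :=
    nhdsWithin_le_nhds <| ((tendsto_jumpShift j k x).eventually hconst).and
      ((tendsto_jumpShift k j x).eventually hconst) |>.mono fun δ h => by rw [h.1, h.2]
  have hlim := ((tendsto_comp_permPt_jumpShift hf (Equiv.swap j b) j k x).const_mul
      (lambdaSign j b x)).sub
    ((tendsto_comp_permPt_jumpShift hf (Equiv.swap j b) k j x).const_mul (lambdaSign j b x))
  rw [sub_self] at hlim
  exact hlim.congr' hsign

theorem tendsto_lambdaOp_jumpShift_sub (hf : Continuous f) (hjk : j ≠ k)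
    (hwall : x j = x k) (hsep : ∀ b, b ≠ j → b ≠ k → x j ≠ x b) :
    Tendsto (fun δ => LambdaOp j f (jumpShift j k δ x) - LambdaOp j f (jumpShift k j δ x))
      (𝓝[>] 0) (𝓝 (f x)) := by
  simp only [lambdaOp_eq_sum, ← Finset.sum_sub_distrib]
  rw [show f x = ∑ b, if b = k then f x else 0 by simp]
  refine tendsto_finsetSum _ fun b _ => ?_
  by_cases hbk : b = k
  · subst hbk
    simpa using tendsto_lambdaSign_mul_jumpShift_sub_of_wall hf hjk hwall
  · simpa [hbk] using tendsto_lambdaSign_mul_jumpShift_sub_of_ne (k := k) hf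
      fun hjb => hsep b hjb.symm hbk

end Jump

theorem memSol.satisfiesJump {N : ℕ} {γ : ℝ} {lam : Fin N → ℂ} {f : Fn N}
    (hf : memSol γ lam f) : SatisfiesJump γ f := by
  intro j k hjk x hwall hsub'
  have hne := hjk.ne
  have hsub : ∀ a b, a ≠ b → s(a, b) ≠ s(j, k) → x a ≠ x b := by
    intro a b hab hsym
    rcases hab.lt_or_gt with h | h
    · exact hsub' a b h fun ⟨ha, hb⟩ => hsym (by rw [ha, hb])
    · exact (hsub' b a h fun ⟨hb, ha⟩ =>
        hsym (by rw [ha, hb, Sym2.eq_swap])).symm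
  have hsubSymm : ∀ a b, a ≠ b → s(a, b) ≠ s(k, j) → x a ≠ x b := by
    simpa only [Sym2.eq_swap] using hsub
  have hsep : ∀ b, b ≠ j → b ≠ k → x j ≠ x b := fun b hbj hbk =>
    (hsub b j hbj (by simp [hbj, hbk])).symm
  have hsep' : ∀ b, b ≠ k → b ≠ j → x k ≠ x b := fun b hbk hbj =>
    hwall ▸ hsep b hbj hbk
  simp only [jumpShift_neg hne]
  have hpq : ∀ᶠ δ in 𝓝[>] 0, jumpShift j k δ x ∈ regPts N ∧ jumpShift k j δ x ∈ regPts N :=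
    (eventually_jumpShift_mem_regPts hne hwall hsub).and
      (eventually_jumpShift_mem_regPts hne.symm hwall.symm hsubSymm)
  have hf₀ := hf.1.1
  have hfpq := (hf₀.tendsto_jumpShift j k x).sub (hf₀.tendsto_jumpShift k j x)
  have hΛ := (tendsto_lambdaOp_jumpShift_sub hf₀ hne hwall hsep).sub
    (tendsto_lambdaOp_jumpShift_sub hf₀ hne.symm hwall.symm hsep').neg
  have hlim := (hfpq.const_mul (Complex.I * lam j - Complex.I * lam k)).add
    (hΛ.const_mul (γ : ℂ))
  rw [sub_self, mul_zero, zero_add, sub_neg_eq_add, ← two_mul, ← mul_assoc,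
    mul_comm (γ : ℂ) 2] at hlim
  refine hlim.congr' (hpq.mono fun δ ⟨hp, hq⟩ => ?_)
  simp only [hf.pd_eq hp, hf.pd_eq hq]
  ring

theorem statement_6_general (N : ℕ) (γ : ℝ) (lam : Fin N → ℂ)
    (f : Fn N) (hf : memSol γ lam f) :
    (∀ x ∈ regPts N, -(∑ j : Fin N, pd j (pd j f) x) = (∑ j : Fin N, (lam j) ^ 2) * f x) ∧
    SatisfiesJump γ f :=
  ⟨fun _ hx => hf.helmholtz hx, hf.satisfiesJump⟩

/-- every `f ∈ sol^γ_λ` solves the QNLS eigenvalue problem with eigenvalue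
`E = ∑_j λ_j²`: it satisfies the Helmholtz equation on the regular vectors and the
derivative jump conditions with coupling `γ`. -/
theorem statement_6 (N : ℕ) (hN : 1 ≤ N) (γ : ℝ) (lam : Fin N → ℂ)
    (f : Fn N) (hf : memSol γ lam f) :
    (∀ x ∈ regPts N, -(∑ j : Fin N, pd j (pd j f) x) = (∑ j : Fin N, (lam j) ^ 2) * f x) ∧
    SatisfiesJump γ f :=
  statement_6_general N γ lam f hf

end
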